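/- In the concrete quasi-free CAR model with past P = {n ∈ ℤ : n < 0} and future F = {n ∈ ℤ : n ≥ 0}: assume there is ε ∈ (0,1/2) with ε ≤ λ_l ≤ 1−ε and λ_l ≠ 1/2 for all l ∈ ℤ, and let ξ ∈ H satisfy the l-th intertwining equations for every l ∈ F. Then for every pair (A,B) of finite subsets of ℤ with ⟨e_{(A,B)}, ξ⟩ ≠ 0, one has card A ≡ card B (mod 2). -/

import Mathlib

/- The concrete quasi-free CAR model: `H = ℓ²(Finset ℤ × Finset ℤ)` with orthonormal basis
`e (A, B)`, vacuum `Ω = e (∅, ∅)`, and operators `a l`, `b l`, `G` given on the basis by the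
quasi-free formulas with symbol `λ` (diagonal, `R h_l = λ_l h_l`). -/

noncomputable section

/-- The GNS Hilbert space: `ℓ²` over pairs of finite subsets of `ℤ`. -/
abbrev CARSpace := lp (fun _ : Finset ℤ × Finset ℤ => ℂ) 2

/-- The orthonormal basis vector `e_{(A,B)}`. -/
def carE (p : Finset ℤ × Finset ℤ) : CARSpace := lp.single 2 p 1

/-- The vacuum vector `Ω = e_{(∅,∅)}`. -/
def carΩ : CARSpace := carE (∅, ∅)

/-- `n(l, X)` = number of elements of `X` strictly below `l`. -/
def nlt (l : ℤ) (X : Finset ℤ) : ℕ := (X.filter fun j => j < l).card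

/-- `a` is the family of quasi-free annihilation-type operators `a_l = π_R(a(h_l))`:
`a_l e_{(A,B)} = √(1−λ_l)·(−1)^{|B|}·(−1)^{n(l,A)}·[l ∉ A]·e_{(A∪{l},B)}
              + √(λ_l)·(−1)^{n(l,B)}·[l ∈ B]·e_{(A,B∖{l})}`. -/
def IsCAR_a (lam : ℤ → ℝ) (a : ℤ → CARSpace →L[ℂ] CARSpace) : Prop :=
  ∀ (l : ℤ) (A B : Finset ℤ),
    a l (carE (A, B)) =
      ((Real.sqrt (1 - lam l) : ℂ) * (-1) ^ B.card * (-1) ^ nlt l A *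
          (if l ∈ A then 0 else 1)) • carE (insert l A, B) +
      ((Real.sqrt (lam l) : ℂ) * (-1) ^ nlt l B *
          (if l ∈ B then 1 else 0)) • carE (A, B.erase l)

/-- `b` is the family of commutant quasi-free operators:
`b_l e_{(A,B)} = √(λ_l)·(−1)^{|B|}·(−1)^{n(l,A)}·[l ∉ A]·e_{(A∪{l},B)}
              − √(1−λ_l)·(−1)^{n(l,B)}·[l ∈ B]·e_{(A,B∖{l})}`. -/
def IsCAR_b (lam : ℤ → ℝ) (b : ℤ → CARSpace →L[ℂ] CARSpace) : Prop :=
  ∀ (l : ℤ) (A B : Finset ℤ),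
    b l (carE (A, B)) =
      ((Real.sqrt (lam l) : ℂ) * (-1) ^ B.card * (-1) ^ nlt l A *
          (if l ∈ A then 0 else 1)) • carE (insert l A, B) -
      ((Real.sqrt (1 - lam l) : ℂ) * (-1) ^ nlt l B *
          (if l ∈ B then 1 else 0)) • carE (A, B.erase l)

/-- `G = Γ⊗Γ` : `G e_{(A,B)} = (−1)^{|A|+|B|} e_{(A,B)}`. -/
def IsCAR_G (G : CARSpace →L[ℂ] CARSpace) : Prop :=
  ∀ (A B : Finset ℤ), G (carE (A, B)) = ((-1 : ℂ) ^ (A.card + B.card)) • carE (A, B)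

/-- `ξ` satisfies the `l`-th intertwining equations:
`(1−λ_l)^{−1/2}·(a_l ξ) = −λ_l^{−1/2}·G(b_l ξ)` and
`λ_l^{−1/2}·(a_l* ξ) = −(1−λ_l)^{−1/2}·b_l*(G ξ)`. -/
def IntertwinesAt (lam : ℤ → ℝ) (a b : ℤ → CARSpace →L[ℂ] CARSpace)
    (G : CARSpace →L[ℂ] CARSpace) (l : ℤ) (ξ : CARSpace) : Prop :=
  (Real.sqrt (1 - lam l) : ℂ)⁻¹ • a l ξ = -((Real.sqrt (lam l) : ℂ)⁻¹) • G (b l ξ) ∧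
  (Real.sqrt (lam l) : ℂ)⁻¹ • (star (a l)) ξ =
    -((Real.sqrt (1 - lam l) : ℂ)⁻¹) • (star (b l)) (G ξ)

local notation "⟪" x ", " y "⟫" => @inner ℂ _ _ x y

/-!
Read the first intertwining equation at the coordinate `(A ∪ {l}, B)`, where `l ∉ A ∪ B`.
When `|A| + |B|` is odd, `G` acts trivially there and the equation becomes
`2 √(λ_l (1 - λ_l)) ξ(A, B) = ± (1 - 2 λ_l) ξ(A ∪ {l}, B ∪ {l})`. As `λ_l (1 - λ_l) ≥ ε²`, this
gives `|ξ(A ∪ {l}, B ∪ {l})| ≥ 2ε |ξ(A, B)|` for the infinitely many future `l ∉ A ∪ B`, and the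
coordinates of a vector of `ℓ²` tend to zero, so `ξ(A, B) = 0`.
-/

open Filter Topology

namespace lp

variable {ι 𝕜 : Type*} [NormedField 𝕜] {E : ι → Type*} [∀ i, NormedAddCommGroup (E i)]
  [∀ i, NormedSpace 𝕜 (E i)] {p q : ENNReal} [Fact (1 ≤ p)] [Fact (1 ≤ q)]

theorem tendsto_norm_apply_cofinite_zero (hp : p ≠ ⊤) (x : lp E p) :
    Tendsto (fun i => ‖x i‖) cofinite (𝓝 0) := by
  classical
  have hp0 : 0 < p := zero_lt_one.trans_le Fact.out
  simpa [lp.norm_single hp0] using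
    ((lp.hasSum_single hp x).summable.tendsto_cofinite_zero).norm

theorem nonpos_of_le_norm_apply_comp (hp : p ≠ ⊤) (x : lp E p) {f : ℕ → ι}
    (hf : Function.Injective f) {c : ℝ} (hc : ∀ n, c ≤ ‖x (f n)‖) : c ≤ 0 := by
  have htend := (tendsto_norm_apply_cofinite_zero hp x).comp hf.tendsto_cofinite
  rw [Nat.cofinite_eq_atTop] at htend
  exact ge_of_tendsto' htend hc

variable [DecidableEq ι]

theorem apply_eq_sum_single_one (hp : p ≠ ⊤) (T : lp (fun _ : ι => 𝕜) p →L[𝕜] lp E q)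
    (x : lp (fun _ : ι => 𝕜) p) (i : ι) (S : Finset ι)
    (hS : ∀ j ∉ S, T (lp.single p j 1) i = 0) :
    T x i = ∑ j ∈ S, x j • T (lp.single p j 1) i := by
  have hsum := ((lp.hasSum_single hp x).mapL T).mapL (lp.evalCLM 𝕜 E q i)
  have hterm (j : ι) :
      lp.evalCLM 𝕜 E q i (T (lp.single p j (x j))) = x j • T (lp.single p j 1) i := by
    have : lp.single p j (x j) = x j • lp.single (E := fun _ : ι => 𝕜) p j 1 := by
      rw [← lp.single_smul, smul_eq_mul, mul_one]
    rw [this, map_smul]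
    rfl
  simp only [hterm] at hsum
  exact hsum.unique (hasSum_sum_of_ne_finset_zero fun j hj => by rw [hS j hj, smul_zero])

end lp

theorem carE_apply (p q : Finset ℤ × Finset ℤ) : carE p q = if q = p then 1 else 0 := by
  simp [carE, lp.single_apply, Pi.single_apply]

theorem inner_carE_left (p : Finset ℤ × Finset ℤ) (x : CARSpace) : ⟪carE p, x⟫ = x p := by
  simpa [carE] using lp.inner_single_left (𝕜 := ℂ) p (1 : ℂ) x

theorem CARSpace.apply_eq_sum (T : CARSpace →L[ℂ] CARSpace) (x : CARSpace)
    (p : Finset ℤ × Finset ℤ) (S : Finset (Finset ℤ × Finset ℤ))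
    (hS : ∀ q ∉ S, T (carE q) p = 0) :
    T x p = ∑ q ∈ S, x q * T (carE q) p :=
  lp.apply_eq_sum_single_one (by simp) T x p S hS

def IsQuasiFreeOp (c d : ℤ → ℂ) (T : ℤ → CARSpace →L[ℂ] CARSpace) : Prop :=
  ∀ (l : ℤ) (A B : Finset ℤ),
    T l (carE (A, B)) =
      (c l * (-1) ^ B.card * (-1) ^ nlt l A * (if l ∈ A then 0 else 1)) • carE (insert l A, B) +
      (d l * (-1) ^ nlt l B * (if l ∈ B then 1 else 0)) • carE (A, B.erase l)

theorem IsCAR_a.isQuasiFreeOp {lam : ℤ → ℝ} {a : ℤ → CARSpace →L[ℂ] CARSpace}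
    (ha : IsCAR_a lam a) :
    IsQuasiFreeOp (fun l => Real.sqrt (1 - lam l)) (fun l => Real.sqrt (lam l)) a :=
  ha

theorem IsCAR_b.isQuasiFreeOp {lam : ℤ → ℝ} {b : ℤ → CARSpace →L[ℂ] CARSpace}
    (hb : IsCAR_b lam b) :
    IsQuasiFreeOp (fun l => Real.sqrt (lam l)) (fun l => -Real.sqrt (1 - lam l)) b := by
  intro l A B
  rw [hb, sub_eq_add_neg, ← neg_smul]
  simp only [neg_mul]

theorem nlt_insert_self (l : ℤ) (X : Finset ℤ) : nlt l (insert l X) = nlt l X := by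
  simp [nlt, Finset.filter_insert]

theorem IsQuasiFreeOp.apply_apply_insert {c d : ℤ → ℂ} {T : ℤ → CARSpace →L[ℂ] CARSpace}
    (hT : IsQuasiFreeOp c d T) {l : ℤ} {A B : Finset ℤ} (hA : l ∉ A) (hB : l ∉ B)
    (x : CARSpace) :
    T l x (insert l A, B) = (-1) ^ B.card * (-1) ^ nlt l A * c l * x (A, B) +
      (-1) ^ nlt l B * d l * x (insert l A, insert l B) := by
  have hne : (A, B) ≠ (insert l A, insert l B) := by
    simp only [ne_eq, Prod.mk.injEq, not_and]
    exact fun h => absurd (h ▸ Finset.mem_insert_self l A) hA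
  rw [CARSpace.apply_eq_sum _ x _ {(A, B), (insert l A, insert l B)}, Finset.sum_pair hne]
  · rw [hT l A B, hT l]
    simp [carE_apply, hA, hB, nlt_insert_self]
    ring
  · rintro ⟨A', B'⟩ hq
    rw [hT l A' B', lp.coeFn_add, Pi.add_apply, lp.coeFn_smul, lp.coeFn_smul, Pi.smul_apply,
      Pi.smul_apply, carE_apply, carE_apply]
    simp only [Finset.mem_insert, Finset.mem_singleton, Prod.mk.injEq, not_or] at hq
    have h1 : l ∉ A' → ¬(insert l A = insert l A' ∧ B = B') := by
      rintro hA' ⟨hAA', rfl⟩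
      refine hq.1 ⟨?_, rfl⟩
      rw [← Finset.erase_insert hA', ← hAA', Finset.erase_insert hA]
    have h2 : l ∈ B' → ¬(insert l A = A' ∧ B = B'.erase l) := by
      rintro hB' ⟨rfl, hBB'⟩
      exact hq.2 ⟨rfl, by rw [hBB', Finset.insert_erase hB']⟩
    by_cases hA' : l ∈ A' <;> by_cases hB' : l ∈ B' <;>
      simp [hA', hB', h1, h2]

theorem IsCAR_G.apply {G : CARSpace →L[ℂ] CARSpace} (hG : IsCAR_G G) (x : CARSpace)
    (p : Finset ℤ × Finset ℤ) :
    G x p = (-1) ^ (p.1.card + p.2.card) * x p := by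
  rw [CARSpace.apply_eq_sum _ x _ {p}, Finset.sum_singleton]
  · rw [hG p.1 p.2]
    simp [carE_apply]
    ring
  · rintro ⟨A', B'⟩ hq
    rw [Finset.mem_singleton] at hq
    rw [hG A' B']
    simp [carE_apply, Ne.symm hq]

theorem IntertwinesAt.apply_relation {lam : ℤ → ℝ} {a b : ℤ → CARSpace →L[ℂ] CARSpace}
    {G : CARSpace →L[ℂ] CARSpace} {l : ℤ} {ξ : CARSpace} (h : IntertwinesAt lam a b G l ξ)
    (ha : IsCAR_a lam a) (hb : IsCAR_b lam b) (hG : IsCAR_G G) (hl0 : 0 < lam l)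
    (hl1 : lam l < 1) {A B : Finset ℤ} (hA : l ∉ A) (hB : l ∉ B) (hAB : Odd (A.card + B.card)) :
    2 * Real.sqrt (lam l) * Real.sqrt (1 - lam l) * ((-1) ^ B.card * (-1) ^ nlt l A * ξ (A, B)) =
      (1 - 2 * lam l : ℝ) * ((-1) ^ nlt l B * ξ (insert l A, insert l B)) := by
  have e := congrArg (fun v : CARSpace => v (insert l A, B)) h.1
  simp only [lp.coeFn_smul, Pi.smul_apply, smul_eq_mul] at e
  rw [ha.isQuasiFreeOp.apply_apply_insert hA hB, hG.apply,
    hb.isQuasiFreeOp.apply_apply_insert hA hB] at e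
  have hsign : (-1 : ℂ) ^ ((insert l A, B).1.card + (insert l A, B).2.card) = 1 := by
    rw [Finset.card_insert_of_notMem hA, add_right_comm]
    exact (hAB.add_one).neg_one_pow
  have hμ : (Real.sqrt (lam l) : ℂ) ≠ 0 := by exact_mod_cast (Real.sqrt_pos.2 hl0).ne'
  have hν : (Real.sqrt (1 - lam l) : ℂ) ≠ 0 := by
    exact_mod_cast (Real.sqrt_pos.2 (sub_pos.2 hl1)).ne'
  rw [hsign, one_mul] at e
  field_simp at e
  rw [show 1 - 2 * lam l = Real.sqrt (1 - lam l) ^ 2 - Real.sqrt (lam l) ^ 2 by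
    rw [Real.sq_sqrt hl0.le, Real.sq_sqrt (sub_pos.2 hl1).le]; ring]
  push_cast
  linear_combination e

theorem IntertwinesAt.two_mul_norm_le {lam : ℤ → ℝ} {a b : ℤ → CARSpace →L[ℂ] CARSpace}
    {G : CARSpace →L[ℂ] CARSpace} {l : ℤ} {ξ : CARSpace} (h : IntertwinesAt lam a b G l ξ)
    (ha : IsCAR_a lam a) (hb : IsCAR_b lam b) (hG : IsCAR_G G) {ε : ℝ} (hε : 0 < ε)
    (hεl : ε ≤ lam l) (hεu : lam l ≤ 1 - ε) {A B : Finset ℤ} (hA : l ∉ A) (hB : l ∉ B)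
    (hAB : Odd (A.card + B.card)) :
    2 * ε * ‖ξ (A, B)‖ ≤ ‖ξ (insert l A, insert l B)‖ := by
  have hl0 : 0 < lam l := hε.trans_le hεl
  have hl1 : lam l < 1 := by linarith
  have hrel := congrArg norm (h.apply_relation ha hb hG hl0 hl1 hA hB hAB)
  simp only [norm_mul, norm_pow, norm_neg, norm_one, one_pow, one_mul, Complex.norm_ofNat,
    Complex.norm_real, Real.norm_eq_abs, abs_of_pos (Real.sqrt_pos.2 hl0),
    abs_of_pos (Real.sqrt_pos.2 (sub_pos.2 hl1))] at hrel
  have hprod : ε ≤ Real.sqrt (lam l) * Real.sqrt (1 - lam l) := by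
    rw [← Real.sqrt_mul hl0.le]
    exact Real.le_sqrt_of_sq_le (by nlinarith)
  calc 2 * ε * ‖ξ (A, B)‖ ≤ 2 * Real.sqrt (lam l) * Real.sqrt (1 - lam l) * ‖ξ (A, B)‖ := by
        rw [mul_assoc 2 (Real.sqrt _)]; gcongr
    _ = |1 - 2 * lam l| * ‖ξ (insert l A, insert l B)‖ := hrel
    _ ≤ ‖ξ (insert l A, insert l B)‖ :=
        mul_le_of_le_one_left (norm_nonneg _) (abs_le.2 ⟨by linarith, by linarith⟩)

theorem Finset.exists_forall_natCast_add_notMem (s : Finset ℤ) :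
    ∃ M : ℕ, ∀ n : ℕ, ((M + n : ℕ) : ℤ) ∉ s :=
  ⟨s.sup Int.toNat + 1, fun n h => by have := Finset.le_sup (f := Int.toNat) h; omega⟩

/-- with past `P = {n < 0}` and future `F = {n ≥ 0}`, assume
`ε ≤ λ_l ≤ 1−ε`, `λ_l ≠ 1/2` for all `l`, with `0 < ε < 1/2`, and let `ξ` satisfy the
`l`-th intertwining equations for every `l ∈ F`. Then for every pair `(A,B)` of finite
subsets of `ℤ` with `⟨e_{(A,B)}, ξ⟩ ≠ 0`, one has `card A ≡ card B (mod 2)`. -/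
theorem stmt15 (lam : ℤ → ℝ) (ε : ℝ) (hε : 0 < ε ∧ ε < 1 / 2)
    (hlam : ∀ l : ℤ, ε ≤ lam l ∧ lam l ≤ 1 - ε ∧ lam l ≠ 1 / 2)
    (a b : ℤ → CARSpace →L[ℂ] CARSpace) (G : CARSpace →L[ℂ] CARSpace)
    (ha : IsCAR_a lam a) (hb : IsCAR_b lam b) (hG : IsCAR_G G)
    (ξ : CARSpace) (hξ : ∀ l : ℤ, 0 ≤ l → IntertwinesAt lam a b G l ξ) :
    ∀ A B : Finset ℤ, ⟪carE (A, B), ξ⟫ ≠ 0 → A.card % 2 = B.card % 2 := by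
  intro A B hξAB
  rw [inner_carE_left] at hξAB
  by_contra hpar
  have hodd : Odd (A.card + B.card) := Nat.odd_iff.2 (by omega)
  obtain ⟨M, hM⟩ := (A ∪ B).exists_forall_natCast_add_notMem
  have hfresh (n : ℕ) : ((M + n : ℕ) : ℤ) ∉ A ∧ ((M + n : ℕ) : ℤ) ∉ B := by
    simpa [not_or] using hM n
  let f (n : ℕ) : Finset ℤ × Finset ℤ := (insert ((M + n : ℕ) : ℤ) A, insert ((M + n : ℕ) : ℤ) B)
  have hf : Function.Injective f := fun n m hnm => by
    have := (Finset.insert_inj (hfresh n).1).1 (congrArg Prod.fst hnm)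
    omega
  have hlow (n : ℕ) : 2 * ε * ‖ξ (A, B)‖ ≤ ‖ξ (f n)‖ :=
    (hξ _ (Int.natCast_nonneg _)).two_mul_norm_le ha hb hG hε.1 (hlam _).1 (hlam _).2.1
      (hfresh n).1 (hfresh n).2 hodd
  have hpos : 0 < 2 * ε * ‖ξ (A, B)‖ := mul_pos (mul_pos two_pos hε.1) (norm_pos_iff.2 hξAB)
  exact (lp.nonpos_of_le_norm_apply_comp (by simp) ξ hf hlow).not_gt hpos

end
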